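/- arXiv:2312.09724 — 2 statements merged into one kernel-verified Lean document; each statement's English description precedes it below -/
import Mathlib

section
/- Let 1 ≤ p1, p2 ≤ ∞ and let σ = (σ_ℓ)_{ℓ≥1} be a nonincreasing sequence of positive reals such that the diagonal operator D_σ : ℓ_{p1} → ℓ_{p2}, (D_σ λ)_ℓ = σ_ℓ λ_ℓ, is bounded. Then for all N, k ∈ ℕ one has σ_{2N−1} · a_k(id : ℓ_{p1}^N → ℓ_{p2}^N) ≤ a_k(D_σ : ℓ_{p1} → ℓ_{p2}). -/
open scoped ENNReal NNReal

/-- The `k`-th approximation number of a bounded linear operator `T : X → Y`: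
`a_k(T) = inf { ‖T - A‖ : A : X → Y bounded linear, rank A < k }`. -/
noncomputable def approxNumber {X Y : Type*} [NormedAddCommGroup X] [NormedSpace ℂ X]
    [NormedAddCommGroup Y] [NormedSpace ℂ Y] (k : ℕ) (T : X →L[ℂ] Y) : ℝ :=
  sInf {c : ℝ | ∃ A : X →L[ℂ] Y,
    Module.rank ℂ (LinearMap.range (A : X →ₗ[ℂ] Y)) < (k : Cardinal) ∧ c = ‖T - A‖}

/-- The identity map `ℓ_p^N → ℓ_q^N` as a continuous linear map. -/
noncomputable def idCLM (p q : ℝ≥0∞) [Fact (1 ≤ p)] [Fact (1 ≤ q)] (N : ℕ) :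
    PiLp p (fun _ : Fin N => ℂ) →L[ℂ] PiLp q (fun _ : Fin N => ℂ) :=
  LinearMap.toContinuousLinearMap
    ((WithLp.linearEquiv q ℂ (∀ _ : Fin N, ℂ)).symm.toLinearMap ∘ₗ
      (WithLp.linearEquiv p ℂ (∀ _ : Fin N, ℂ)).toLinearMap)

/-!
Extension by zero `J : ℓ_{p₁}^N → ℓ_{p₁}` is a contraction, and restricting to the first `N`
coordinates while dividing the `ℓ`-th one by `σ_ℓ` is an operator `R : ℓ_{p₂} → ℓ_{p₂}^N` of norm
at most `σ_N⁻¹`, by monotonicity of `σ`. Since `id = R ∘ D_σ ∘ J` and approximation numbers form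
an operator ideal, `a_k(id) ≤ ‖R‖ ‖J‖ a_k(D_σ) ≤ σ_N⁻¹ a_k(D_σ)`; finally `σ_{2N-1} ≤ σ_N`.
-/

universe uK uW uX uY uZ

theorem LinearMap.rank_comp_comp_lt {K : Type uK} {W : Type uW} {X : Type uX} {Y : Type uY}
    {Z : Type uZ} [Semiring K] [AddCommMonoid W] [Module K W] [AddCommMonoid X] [Module K X]
    [AddCommMonoid Y] [Module K Y] [AddCommMonoid Z] [Module K Z] {k : ℕ}
    (R : Y →ₗ[K] Z) (A : X →ₗ[K] Y) (J : W →ₗ[K] X) (hA : A.rank < k) :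
    (R ∘ₗ A ∘ₗ J).rank < k := by
  have h : Cardinal.lift.{uY} (R ∘ₗ A ∘ₗ J).rank ≤ Cardinal.lift.{uZ} A.rank :=
    (LinearMap.lift_rank_comp_le_right (A ∘ₗ J) R).trans
      (Cardinal.lift_le.2 (LinearMap.rank_comp_le_left J A))
  exact Cardinal.lift_lt_nat_iff.1 (h.trans_lt (Cardinal.lift_lt_nat_iff.2 hA))

section ApproxNumber

variable {W X Y Z : Type*} [NormedAddCommGroup W] [NormedSpace ℂ W] [NormedAddCommGroup X]
  [NormedSpace ℂ X] [NormedAddCommGroup Y] [NormedSpace ℂ Y] [NormedAddCommGroup Z]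
  [NormedSpace ℂ Z]

theorem approxNumber_le_norm_sub {k : ℕ} (T A : X →L[ℂ] Y)
    (hA : Module.rank ℂ (LinearMap.range (A : X →ₗ[ℂ] Y)) < k) :
    approxNumber k T ≤ ‖T - A‖ :=
  csInf_le ⟨0, by rintro _ ⟨B, -, rfl⟩; exact norm_nonneg _⟩ ⟨A, hA, rfl⟩

theorem approxNumber_nonneg (k : ℕ) (T : X →L[ℂ] Y) : 0 ≤ approxNumber k T :=
  Real.sInf_nonneg <| by rintro _ ⟨A, -, rfl⟩; exact norm_nonneg _

theorem approxNumber_zero (T : X →L[ℂ] Y) : approxNumber 0 T = 0 := by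
  simp [approxNumber]

theorem approxNumber_comp_le (k : ℕ) (R : Y →L[ℂ] Z) (T : X →L[ℂ] Y) (J : W →L[ℂ] X) :
    approxNumber k (R ∘L T ∘L J) ≤ ‖R‖ * ‖J‖ * approxNumber k T := by
  rcases Nat.eq_zero_or_pos k with rfl | hk
  · simp [approxNumber_zero]
  rw [← smul_eq_mul, approxNumber, approxNumber, ← Real.sInf_smul_of_nonneg (by positivity)]
  refine le_csInf ⟨_, Set.smul_mem_smul_set ⟨0, by simpa using hk, rfl⟩⟩ ?_
  rintro _ ⟨_, ⟨A, hA, rfl⟩, rfl⟩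
  calc approxNumber k (R ∘L T ∘L J)
      ≤ ‖R ∘L T ∘L J - R ∘L A ∘L J‖ :=
        approxNumber_le_norm_sub _ _ (LinearMap.rank_comp_comp_lt _ _ _ hA)
    _ = ‖R ∘L (T - A) ∘L J‖ := by
        rw [ContinuousLinearMap.sub_comp, ContinuousLinearMap.comp_sub]
    _ ≤ ‖R‖ * (‖T - A‖ * ‖J‖) :=
        (R.opNorm_comp_le _).trans (by gcongr; exact (T - A).opNorm_comp_le J)
    _ = (‖R‖ * ‖J‖) • ‖T - A‖ := by rw [smul_eq_mul]; ring

end ApproxNumber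

namespace lp

variable {α β : Type*} {E : α → Type*} {F : β → Type*} [∀ a, NormedAddCommGroup (E a)]
  [∀ b, NormedAddCommGroup (F b)] {p : ℝ≥0∞} {g : α → β}

theorem norm_le_mul_norm_of_le_comp (hp : p ≠ 0) (hg : g.Injective) {x : lp E p} {y : lp F p}
    {C : ℝ} (hC : 0 ≤ C) (h : ∀ a, ‖x a‖ ≤ C * ‖y (g a)‖) : ‖x‖ ≤ C * ‖y‖ := by
  obtain rfl | rfl | hp := p.trichotomy
  · exact absurd rfl hp
  · exact norm_le_of_forall_le (mul_nonneg hC (norm_nonneg' y)) fun a ↦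
      (h a).trans (by gcongr; exact norm_apply_le_norm hp y (g a))
  · refine norm_le_of_forall_sum_le hp (mul_nonneg hC (norm_nonneg' y)) fun s ↦ ?_
    calc ∑ a ∈ s, ‖x a‖ ^ p.toReal
        ≤ ∑ a ∈ s, (C * ‖y (g a)‖) ^ p.toReal := by gcongr with a; exact h a
      _ = C ^ p.toReal * ∑ b ∈ s.map ⟨g, hg⟩, ‖y b‖ ^ p.toReal := by
          simp only [Finset.sum_map, Finset.mul_sum, Function.Embedding.coeFn_mk,
            Real.mul_rpow hC (norm_nonneg _)]
      _ ≤ C ^ p.toReal * ‖y‖ ^ p.toReal := by gcongr; exact sum_rpow_le_norm_rpow hp y _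
      _ = (C * ‖y‖) ^ p.toReal := (Real.mul_rpow hC (norm_nonneg' y)).symm

theorem norm_le_norm_of_comp_le (hp : p ≠ 0) (hg : g.Injective) {x : lp E p} {y : lp F p}
    (hy : ∀ b ∉ Set.range g, y b = 0) (h : ∀ a, ‖y (g a)‖ ≤ ‖x a‖) : ‖y‖ ≤ ‖x‖ := by
  obtain rfl | rfl | hp := p.trichotomy
  · exact absurd rfl hp
  · refine norm_le_of_forall_le (norm_nonneg' x) fun b ↦ ?_
    by_cases hb : b ∈ Set.range g
    · obtain ⟨a, rfl⟩ := hb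
      exact (h a).trans (norm_apply_le_norm hp x a)
    · simp [hy b hb]
  · refine norm_le_of_forall_sum_le hp (norm_nonneg' x) fun s ↦ ?_
    calc ∑ b ∈ s, ‖y b‖ ^ p.toReal
        = ∑ a ∈ s.preimage g hg.injOn, ‖y (g a)‖ ^ p.toReal := by
          refine (Finset.sum_preimage g s hg.injOn _ fun b _ hb ↦ ?_).symm
          simp [hy b hb, Real.zero_rpow hp.ne']
      _ ≤ ∑ a ∈ s.preimage g hg.injOn, ‖x a‖ ^ p.toReal := by gcongr with a; exact h a
      _ ≤ ‖x‖ ^ p.toReal := sum_rpow_le_norm_rpow hp x _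

end lp

section ExtendRestrict

open Function

variable {α β 𝕜 E : Type*} [Fintype α] [NontriviallyNormedField 𝕜] [NormedAddCommGroup E]
  [NormedSpace 𝕜 E] (p : ℝ≥0∞) {g : α → β}

theorem memℓp_extend_zero (x : α → E) : Memℓp (extend g x 0) p := by
  refine (memℓp_zero ((Set.finite_range g).subset fun b hb ↦ ?_)).of_exponent_ge zero_le
  by_contra hb'
  exact hb (extend_apply' _ _ _ hb')

variable [Fact (1 ≤ p)]

noncomputable def extendByZeroCLM (hg : g.Injective) :
    PiLp p (fun _ : α => E) →L[𝕜] lp (fun _ : β => E) p :=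
  LinearMap.mkContinuous
    { toFun x := ⟨extend g x 0, memℓp_extend_zero p x⟩
      map_add' x y := by
        ext b
        have h := congrFun (extend_add g x.ofLp y.ofLp 0 0) b
        rw [add_zero] at h
        exact h
      map_smul' c x := by
        ext b
        have h := congrFun (extend_smul c g x.ofLp 0) b
        rw [smul_zero] at h
        exact h }
    1 fun x ↦ by
      rw [one_mul, ← (lpPiLpₗᵢ (fun _ : α => E) 𝕜 (p := p)).symm.norm_map]
      refine lp.norm_le_norm_of_comp_le (zero_lt_one.trans_le Fact.out).ne' hg
        (fun b hb ↦ extend_apply' _ _ _ hb) fun a ↦ ?_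
      exact (congrArg norm (hg.extend_apply _ _ a)).le

theorem extendByZeroCLM_apply (hg : g.Injective) (x : PiLp p (fun _ : α => E)) (b : β) :
    extendByZeroCLM (𝕜 := 𝕜) p hg x b = extend g x 0 b := rfl

theorem norm_extendByZeroCLM_le (hg : g.Injective) :
    ‖extendByZeroCLM (𝕜 := 𝕜) (E := E) p hg‖ ≤ 1 :=
  LinearMap.mkContinuous_norm_le _ zero_le_one _

noncomputable def weightedRestrictCLM (hg : g.Injective) (w : α → 𝕜) :
    lp (fun _ : β => E) p →L[𝕜] PiLp p (fun _ : α => E) :=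
  LinearMap.mkContinuous
    { toFun y := WithLp.toLp p fun a ↦ w a • y (g a)
      map_add' y z := by ext a; simp [smul_add]
      map_smul' c y := by ext a; simp [smul_comm (w a) c] }
    ‖w‖ fun y ↦ by
      rw [← (lpPiLpₗᵢ (fun _ : α => E) 𝕜 (p := p)).symm.norm_map]
      refine lp.norm_le_mul_norm_of_le_comp (zero_lt_one.trans_le Fact.out).ne' hg (norm_nonneg w)
        fun a ↦ ?_
      exact (norm_smul_le _ _).trans (by gcongr; exact norm_le_pi_norm w a)

theorem weightedRestrictCLM_apply (hg : g.Injective) (w : α → 𝕜) (y : lp (fun _ : β => E) p)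
    (a : α) : weightedRestrictCLM p hg w y a = w a • y (g a) := rfl

theorem norm_weightedRestrictCLM_le (hg : g.Injective) (w : α → 𝕜) :
    ‖weightedRestrictCLM (E := E) p hg w‖ ≤ ‖w‖ :=
  LinearMap.mkContinuous_norm_le _ (norm_nonneg w) _

end ExtendRestrict

theorem weightedRestrictCLM_comp_comp_extendByZeroCLM {p₁ p₂ : ℝ≥0∞} [Fact (1 ≤ p₁)]
    [Fact (1 ≤ p₂)] {N : ℕ} (s : ℕ → ℂ) (hs : ∀ i < N, s i ≠ 0)
    (D : lp (fun _ : ℕ => ℂ) p₁ →L[ℂ] lp (fun _ : ℕ => ℂ) p₂) (hD : ∀ x ℓ, D x ℓ = s ℓ * x ℓ) :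
    weightedRestrictCLM p₂ Fin.val_injective (fun i ↦ (s i)⁻¹) ∘L D ∘L
      extendByZeroCLM p₁ Fin.val_injective = idCLM p₁ p₂ N := by
  ext x i
  change (s i)⁻¹ • D (extendByZeroCLM p₁ Fin.val_injective x) i = x i
  rw [hD, extendByZeroCLM_apply, Fin.val_injective.extend_apply, smul_eq_mul, ← mul_assoc,
    inv_mul_cancel₀ (hs i i.isLt), one_mul]

theorem statement4 (p1 p2 : ℝ≥0∞) [Fact (1 ≤ p1)] [Fact (1 ≤ p2)]
    (σ : ℕ → ℝ) (hσpos : ∀ ℓ, 1 ≤ ℓ → 0 < σ ℓ)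
    (hσmono : ∀ j ℓ, 1 ≤ j → j ≤ ℓ → σ ℓ ≤ σ j)
    (D : lp (fun _ : ℕ => ℂ) p1 →L[ℂ] lp (fun _ : ℕ => ℂ) p2)
    (hD : ∀ (x : lp (fun _ : ℕ => ℂ) p1) (ℓ : ℕ), D x ℓ = (σ (ℓ + 1) : ℂ) * x ℓ) :
    ∀ N k : ℕ, 1 ≤ N → 1 ≤ k →
      σ (2 * N - 1) * approxNumber k (idCLM p1 p2 N) ≤ approxNumber k D := by
  intro N k hN _
  have hσN : 0 < σ N := hσpos N hN
  set R := weightedRestrictCLM (E := ℂ) p2 Fin.val_injective fun i : Fin N ↦ ((σ (i + 1) : ℂ))⁻¹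
  set J := extendByZeroCLM (𝕜 := ℂ) (E := ℂ) p1 (Fin.val_injective (n := N))
  have hR : ‖R‖ ≤ (σ N)⁻¹ := (norm_weightedRestrictCLM_le _ _ _).trans <|
    (pi_norm_le_iff_of_nonneg (by positivity)).2 fun i ↦ by
      have hσi : 0 < σ (i + 1) := hσpos _ (by omega)
      rw [norm_inv, Complex.norm_real, Real.norm_of_nonneg hσi.le]
      exact inv_anti₀ hσN (hσmono _ _ (by omega) (by omega))
  have hRJ : ‖R‖ * ‖J‖ ≤ (σ N)⁻¹ := by
    simpa using mul_le_mul hR (norm_extendByZeroCLM_le _ _) (norm_nonneg J) (by positivity)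
  have hid : approxNumber k (idCLM p1 p2 N) ≤ (σ N)⁻¹ * approxNumber k D := by
    rw [← weightedRestrictCLM_comp_comp_extendByZeroCLM _
      (fun i _ ↦ mod_cast (hσpos (i + 1) (by omega)).ne') D hD]
    exact (approxNumber_comp_le k R D J).trans
      (mul_le_mul_of_nonneg_right hRJ (approxNumber_nonneg k D))
  calc σ (2 * N - 1) * approxNumber k (idCLM p1 p2 N)
      ≤ σ N * approxNumber k (idCLM p1 p2 N) := by
        gcongr
        exacts [approxNumber_nonneg _ _, hσmono _ _ hN (by omega)]
    _ ≤ σ N * ((σ N)⁻¹ * approxNumber k D) := by gcongr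
    _ = approxNumber k D := by rw [← mul_assoc, mul_inv_cancel₀ hσN.ne', one_mul]
end

section
/- Let 1 ≤ p1 ≤ p2 ≤ 2 or 2 ≤ p1 ≤ p2 ≤ ∞ and N ∈ ℕ. Then a_k(id : ℓ_{p1}^N → ℓ_{p2}^N) ≤ 1 for all k ≤ N and a_k(id : ℓ_{p1}^N → ℓ_{p2}^N) = 0 for k > N. Moreover, there is a constant c > 0, independent of N and k, such that a_k(id : ℓ_{p1}^N → ℓ_{p2}^N) ≥ c whenever k ≤ N/4. -/
/-!
The upper bounds hold because the `ℓ_p` norms decrease in `p` and the identity has rank `N`.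

For the lower bound, let `rank A < k ≤ N/4` and read `T = id - A` as a matrix on `ℓ_2^N`. If `B`
fixes a subspace `K` pointwise, Bessel's inequality for an orthonormal basis of `K` and Parseval
for the unit vectors give `∑ⱼ ‖B† eⱼ‖² ≥ dim K`. Since `T` fixes `ker A` and `T†` fixes
`(range A)ᗮ`, both of dimension `> 3N/4`, some column `T eⱼ` and some row `x = T† eⱼ` have
Euclidean norm `≥ 1/2`. If `p₂ ≤ 2`, the column is bounded by `‖T‖_{p₁ → p₂}`, as
`‖·‖₂ ≤ ‖·‖_{p₂}` and `‖eⱼ‖_{p₁} = 1`. If `2 ≤ p₁`, testing `T` on the row gives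
`‖x‖₂² = (T x)ⱼ ≤ ‖T x‖_{p₂} ≤ ‖T‖ ‖x‖_{p₁} ≤ ‖T‖ ‖x‖₂`.
-/

open scoped ENNReal NNReal

open Module ContinuousLinearMap
open scoped InnerProductSpace

section approxNumber

variable {X Y : Type*} [NormedAddCommGroup X] [NormedSpace ℂ X] [NormedAddCommGroup Y]
  [NormedSpace ℂ Y] {k : ℕ}

theorem approxNumber_le_norm (hk : 1 ≤ k) (T : X →L[ℂ] Y) : approxNumber k T ≤ ‖T‖ := by
  refine csInf_le ⟨0, ?_⟩ ⟨0, ?_, by rw [sub_zero]⟩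
  · rintro c ⟨A, -, rfl⟩
    exact norm_nonneg _
  · rw [toLinearMap_zero, LinearMap.range_zero, rank_bot]
    exact_mod_cast hk

theorem le_approxNumber (hk : 1 ≤ k) {T : X →L[ℂ] Y} {c : ℝ}
    (h : ∀ A : X →L[ℂ] Y, Module.rank ℂ (LinearMap.range (A : X →ₗ[ℂ] Y)) < k → c ≤ ‖T - A‖) :
    c ≤ approxNumber k T := by
  refine le_csInf ⟨‖T - 0‖, 0, ?_, rfl⟩ ?_
  · rw [toLinearMap_zero, LinearMap.range_zero, rank_bot]
    exact_mod_cast hk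
  · rintro c ⟨A, hA, rfl⟩
    exact h A hA

theorem approxNumber_eq_zero_of_rank_lt (hX : Module.rank ℂ X < k) (T : X →L[ℂ] Y) :
    approxNumber k T = 0 := by
  have hT : (0 : ℝ) ∈ {c : ℝ | ∃ A : X →L[ℂ] Y,
      Module.rank ℂ (LinearMap.range (A : X →ₗ[ℂ] Y)) < k ∧ c = ‖T - A‖} :=
    ⟨T, Cardinal.lift_lt_nat_iff.mp <| (lift_rank_range_le (T : X →ₗ[ℂ] Y)).trans_lt
      (Cardinal.lift_lt_nat_iff.mpr hX), by rw [sub_self, norm_zero]⟩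
  refine le_antisymm (csInf_le ⟨0, ?_⟩ hT) (le_csInf ⟨0, hT⟩ ?_) <;>
  · rintro c ⟨A, -, rfl⟩
    exact norm_nonneg _

end approxNumber

section Hilbert

variable {𝕜 E ι : Type*} [RCLike 𝕜] [NormedAddCommGroup E] [InnerProductSpace 𝕜 E]
  [CompleteSpace E] [Fintype ι]

theorem finrank_le_sum_norm_adjoint_apply_sq {B : E →L[𝕜] E} {K : Submodule 𝕜 E}
    (hB : ∀ x ∈ K, B x = x) (b : OrthonormalBasis ι 𝕜 E) :
    (finrank 𝕜 K : ℝ) ≤ ∑ i, ‖adjoint B (b i)‖ ^ 2 := by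
  have := b.toBasis.finiteDimensional_of_finite
  let w := stdOrthonormalBasis 𝕜 K
  have hw : Orthonormal 𝕜 fun l ↦ (w l : E) := w.orthonormal.comp_linearIsometry K.subtypeₗᵢ
  calc (finrank 𝕜 K : ℝ) = ∑ l, ∑ i, ‖⟪b i, (w l : E)⟫_𝕜‖ ^ 2 := by
        simp [b.sum_sq_norm_inner_right, hw.1]
    _ = ∑ i, ∑ l, ‖⟪(w l : E), adjoint B (b i)⟫_𝕜‖ ^ 2 := by
        rw [Finset.sum_comm]
        congr! 2 with i - l
        rw [adjoint_inner_right, hB _ (w l).2, ← norm_inner_symm]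
    _ ≤ ∑ i, ‖adjoint B (b i)‖ ^ 2 := by
        gcongr with i
        exact hw.sum_inner_products_le _

theorem exists_finrank_div_le_norm_adjoint_apply_sq [Nonempty ι] {B : E →L[𝕜] E}
    {K : Submodule 𝕜 E} (hB : ∀ x ∈ K, B x = x) (b : OrthonormalBasis ι 𝕜 E) :
    ∃ i, (finrank 𝕜 K : ℝ) / Fintype.card ι ≤ ‖adjoint B (b i)‖ ^ 2 := by
  obtain ⟨i, -, hi⟩ := Finset.exists_le_of_sum_le Finset.univ_nonempty <|
    calc ∑ _ : ι, (finrank 𝕜 K : ℝ) / Fintype.card ι = finrank 𝕜 K := by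
          simp [Finset.card_univ, mul_div_cancel₀]
      _ ≤ _ := finrank_le_sum_norm_adjoint_apply_sq hB b
  exact ⟨i, hi⟩

theorem exists_one_sub_div_le_norm_adjoint_one_sub_apply_sq [Nonempty ι] (A : E →L[𝕜] E)
    (b : OrthonormalBasis ι 𝕜 E) :
    ∃ i, 1 - (finrank 𝕜 A.range : ℝ) / Fintype.card ι ≤ ‖adjoint (1 - A) (b i)‖ ^ 2 := by
  have := b.toBasis.finiteDimensional_of_finite
  have hfix : ∀ x ∈ A.ker, (1 - A) x = x := fun x hx ↦ by simp [show A x = 0 from hx]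
  obtain ⟨i, hi⟩ := exists_finrank_div_le_norm_adjoint_apply_sq hfix b
  refine ⟨i, le_of_eq_of_le ?_ hi⟩
  rw [one_sub_div (Nat.cast_ne_zero.mpr Fintype.card_ne_zero), ← finrank_eq_card_basis b.toBasis,
    ← LinearMap.finrank_range_add_finrank_ker (A : E →ₗ[𝕜] E), Nat.cast_add, add_sub_cancel_left]

theorem exists_one_sub_div_le_norm_one_sub_apply_sq [Nonempty ι] (A : E →L[𝕜] E)
    (b : OrthonormalBasis ι 𝕜 E) :
    ∃ i, 1 - (finrank 𝕜 A.range : ℝ) / Fintype.card ι ≤ ‖(1 - A) (b i)‖ ^ 2 := by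
  have := b.toBasis.finiteDimensional_of_finite
  have hfix : ∀ x ∈ A.rangeᗮ, adjoint (1 - A) x = x := fun x hx ↦ by
    rw [orthogonal_range] at hx
    rw [map_sub, sub_apply, show adjoint A x = 0 from hx, sub_zero, one_def, adjoint_id, id_apply]
  obtain ⟨i, hi⟩ := exists_finrank_div_le_norm_adjoint_apply_sq hfix b
  rw [adjoint_adjoint] at hi
  refine ⟨i, le_of_eq_of_le ?_ hi⟩
  rw [one_sub_div (Nat.cast_ne_zero.mpr Fintype.card_ne_zero), ← finrank_eq_card_basis b.toBasis,
    ← A.range.finrank_add_finrank_orthogonal, Nat.cast_add, add_sub_cancel_left]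

end Hilbert

namespace PiLp

open WithLp

theorem norm_toLp_le_norm_toLp_of_le {ι : Type*} [Fintype ι] {β : ι → Type*}
    [∀ i, SeminormedAddCommGroup (β i)] {p q : ℝ≥0∞} [Fact (1 ≤ p)] (hpq : p ≤ q)
    (x : ∀ i, β i) : ‖toLp q x‖ ≤ ‖toLp p x‖ := by
  set S := ‖toLp p x‖ with hS
  have hxS (i : ι) : ‖x i‖ ≤ S := norm_apply_le (toLp p x) i
  rcases eq_or_ne q ∞ with rfl | hq
  · rw [norm_eq_ciSup]
    exact Real.iSup_le hxS (norm_nonneg _)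
  have hp : p ≠ ∞ := ne_top_of_le_ne_top hq hpq
  have hp0 : 0 < p.toReal := ENNReal.toReal_pos (zero_lt_one.trans_le Fact.out).ne' hp
  have hpq' : p.toReal ≤ q.toReal := ENNReal.toReal_mono hq hpq
  have hq0 : 0 < q.toReal := hp0.trans_le hpq'
  have hSp : S ^ p.toReal = ∑ i, ‖x i‖ ^ p.toReal := by
    rw [hS, norm_eq_sum hp0, one_div, Real.rpow_inv_rpow (by positivity) hp0.ne']
  have hsum : ∑ i, ‖x i‖ ^ q.toReal ≤ S ^ q.toReal := calc
    ∑ i, ‖x i‖ ^ q.toReal = ∑ i, ‖x i‖ ^ p.toReal * ‖x i‖ ^ (q.toReal - p.toReal) := by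
      congr! 1 with i
      rw [← Real.rpow_add' (norm_nonneg _) (by linarith), add_sub_cancel]
    _ ≤ ∑ i, ‖x i‖ ^ p.toReal * S ^ (q.toReal - p.toReal) := by
      gcongr with i
      exact hxS i
    _ = S ^ q.toReal := by
      rw [← Finset.sum_mul, ← hSp, ← Real.rpow_add' (norm_nonneg _) (by linarith),
        add_sub_cancel]
  rw [norm_eq_sum hq0, one_div]
  calc (∑ i, ‖(toLp q x) i‖ ^ q.toReal) ^ q.toReal⁻¹ ≤ (S ^ q.toReal) ^ q.toReal⁻¹ := by
        gcongr
    _ = S := Real.rpow_rpow_inv (norm_nonneg _) hq0.ne'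

end PiLp

section idCLM

variable {p q : ℝ≥0∞} [Fact (1 ≤ p)] [Fact (1 ≤ q)] {N : ℕ}

theorem idCLM_apply (x : PiLp p (fun _ : Fin N => ℂ)) :
    idCLM p q N x = WithLp.toLp q (WithLp.ofLp x) :=
  rfl

theorem norm_idCLM_apply_le (hpq : p ≤ q) (x : PiLp p (fun _ : Fin N => ℂ)) :
    ‖idCLM p q N x‖ ≤ ‖x‖ :=
  PiLp.norm_toLp_le_norm_toLp_of_le hpq (WithLp.ofLp x)

theorem norm_idCLM_le (hpq : p ≤ q) : ‖idCLM p q N‖ ≤ 1 :=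
  opNorm_le_bound _ zero_le_one fun x ↦ (norm_idCLM_apply_le hpq x).trans_eq (one_mul _).symm

noncomputable def toL2 (T : PiLp p (fun _ : Fin N => ℂ) →L[ℂ] PiLp q (fun _ : Fin N => ℂ)) :
    EuclideanSpace ℂ (Fin N) →L[ℂ] EuclideanSpace ℂ (Fin N) :=
  idCLM q 2 N ∘L T ∘L idCLM 2 p N

theorem toL2_idCLM_sub (A : PiLp p (fun _ : Fin N => ℂ) →L[ℂ] PiLp q (fun _ : Fin N => ℂ)) :
    toL2 (idCLM p q N - A) = 1 - toL2 A :=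
  rfl

theorem finrank_range_toL2_le
    (A : PiLp p (fun _ : Fin N => ℂ) →L[ℂ] PiLp q (fun _ : Fin N => ℂ)) :
    finrank ℂ (toL2 A).range ≤ finrank ℂ A.range :=
  Cardinal.toNat_le_toNat ((LinearMap.rank_comp_le_right _ _).trans (LinearMap.rank_comp_le_left _ _))
    (Module.rank_lt_aleph0 _ _)

theorem norm_toL2_apply_single_le (hq : q ≤ 2)
    (T : PiLp p (fun _ : Fin N => ℂ) →L[ℂ] PiLp q (fun _ : Fin N => ℂ)) (j : Fin N) :
    ‖toL2 T (EuclideanSpace.single j 1)‖ ≤ ‖T‖ := calc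
  ‖toL2 T (EuclideanSpace.single j 1)‖ ≤ ‖T (idCLM 2 p N (EuclideanSpace.single j 1))‖ :=
      norm_idCLM_apply_le hq _
  _ ≤ ‖T‖ * ‖idCLM 2 p N (EuclideanSpace.single j 1)‖ := T.le_opNorm _
  _ = ‖T‖ := by
    simp only [idCLM_apply, PiLp.ofLp_single, PiLp.toLp_single, PiLp.norm_single, norm_one, mul_one]

theorem norm_adjoint_toL2_apply_single_le (hp : 2 ≤ p)
    (T : PiLp p (fun _ : Fin N => ℂ) →L[ℂ] PiLp q (fun _ : Fin N => ℂ)) (j : Fin N) :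
    ‖adjoint (toL2 T) (EuclideanSpace.single j 1)‖ ≤ ‖T‖ := by
  set x := adjoint (toL2 T) (EuclideanSpace.single j 1)
  have key : ‖x‖ ^ 2 ≤ ‖T‖ * ‖x‖ := calc
    ‖x‖ ^ 2 = ‖⟪x, x⟫_ℂ‖ := by rw [inner_self_eq_norm_sq_to_K]; simp
    _ = ‖⟪EuclideanSpace.single j 1, toL2 T x⟫_ℂ‖ := by
      rw [← adjoint_inner_left (toL2 T) x (EuclideanSpace.single j 1)]
    _ = ‖T (idCLM 2 p N x) j‖ := by
      rw [EuclideanSpace.inner_single_left, map_one, one_mul]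
      rfl
    _ ≤ ‖T (idCLM 2 p N x)‖ := PiLp.norm_apply_le _ _
    _ ≤ ‖T‖ * ‖idCLM 2 p N x‖ := T.le_opNorm _
    _ ≤ ‖T‖ * ‖x‖ := by gcongr; exact norm_idCLM_apply_le hp x
  rcases (norm_nonneg x).eq_or_lt with hx | hx
  · exact hx ▸ norm_nonneg T
  · rw [sq] at key
    exact le_of_mul_le_mul_right key hx

end idCLM

theorem one_sub_div_le_sq_norm_idCLM_sub {p₁ p₂ : ℝ≥0∞} [Fact (1 ≤ p₁)] [Fact (1 ≤ p₂)]
    (hp : p₂ ≤ 2 ∨ 2 ≤ p₁) {N : ℕ} [NeZero N]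
    (A : PiLp p₁ (fun _ : Fin N => ℂ) →L[ℂ] PiLp p₂ (fun _ : Fin N => ℂ)) :
    1 - (finrank ℂ A.range : ℝ) / N ≤ ‖idCLM p₁ p₂ N - A‖ ^ 2 := by
  have hr : 1 - (finrank ℂ A.range : ℝ) / N ≤ 1 - (finrank ℂ (toL2 A).range : ℝ) / N := by
    gcongr
    exact_mod_cast finrank_range_toL2_le A
  refine hr.trans ?_
  rcases hp with hp₂ | hp₁
  · obtain ⟨j, hj⟩ :=
      exists_one_sub_div_le_norm_one_sub_apply_sq (toL2 A) (EuclideanSpace.basisFun (Fin N) ℂ)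
    rw [← toL2_idCLM_sub, EuclideanSpace.basisFun_apply, Fintype.card_fin] at hj
    exact hj.trans (by gcongr; exact norm_toL2_apply_single_le hp₂ _ j)
  · obtain ⟨j, hj⟩ := exists_one_sub_div_le_norm_adjoint_one_sub_apply_sq (toL2 A)
      (EuclideanSpace.basisFun (Fin N) ℂ)
    rw [← toL2_idCLM_sub, EuclideanSpace.basisFun_apply, Fintype.card_fin] at hj
    exact hj.trans (by gcongr; exact norm_adjoint_toL2_apply_single_le hp₁ _ j)

theorem statement5 (p1 p2 : ℝ≥0∞) [Fact (1 ≤ p1)] [Fact (1 ≤ p2)]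
    (hcase : (1 ≤ p1 ∧ p1 ≤ p2 ∧ p2 ≤ 2) ∨ (2 ≤ p1 ∧ p1 ≤ p2 ∧ p2 ≤ ∞)) :
    (∀ N k : ℕ, 1 ≤ k → k ≤ N → approxNumber k (idCLM p1 p2 N) ≤ 1) ∧
    (∀ N k : ℕ, N < k → approxNumber k (idCLM p1 p2 N) = 0) ∧
    (∃ c : ℝ, 0 < c ∧ ∀ N k : ℕ, 1 ≤ k → 4 * k ≤ N → c ≤ approxNumber k (idCLM p1 p2 N)) := by
  have hp12 : p1 ≤ p2 := by rcases hcase with ⟨-, h, -⟩ | ⟨-, h, -⟩ <;> exact h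
  refine ⟨fun N k hk _ ↦ (approxNumber_le_norm hk _).trans (norm_idCLM_le hp12),
    fun N k hNk ↦ approxNumber_eq_zero_of_rank_lt ?_ _,
    1 / 2, by norm_num, fun N k hk hkN ↦ le_approxNumber hk fun A hA ↦ ?_⟩
  · rw [(WithLp.linearEquiv p1 ℂ _).rank_eq, rank_fin_fun]
    exact_mod_cast hNk
  · have : NeZero N := ⟨by omega⟩
    have hr : (finrank ℂ A.range : ℝ) / N ≤ 3 / 4 := by
      have hrk : (finrank ℂ A.range : ℝ) + 1 ≤ k := by
        exact_mod_cast Module.finrank_lt_of_rank_lt hA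
      have hkN' : (4 * k : ℝ) ≤ N := by exact_mod_cast hkN
      rw [div_le_iff₀ (by exact_mod_cast Nat.pos_of_ne_zero (NeZero.ne N))]
      linarith
    refine le_of_pow_le_pow_left₀ two_ne_zero (norm_nonneg _) ?_
    calc (1 / 2 : ℝ) ^ 2 ≤ 1 - (finrank ℂ A.range : ℝ) / N := by linarith
      _ ≤ _ := one_sub_div_le_sq_norm_idCLM_sub (hcase.imp (·.2.2) (·.1)) A
end
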